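/- Let K be a compact linearly ordered space and f : K → ℝ a continuous increasing function. Then ess(f), the set of essential points of f, together with the restriction f|_{ess(f)}, is an at-most-two-to-one map onto f(K): each fiber of f restricted to ess(f) has at most two elements. -/
import Mathlib


/-- `p` is irrelevant for `f`: `f` is constant on some interval [a,b] with a ≤ p ≤ b,
where (a < p or p is the minimum) and (p < b or p is the maximum). -/
def Irrelevant {K : Type*} [TopologicalSpace K] [LinearOrder K]
    (f : K → ℝ) (p : K) : Prop :=
  ∃ a b : K, a ≤ p ∧ p ≤ b ∧ (a < p ∨ IsBot p) ∧ (p < b ∨ IsTop p) ∧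
    ∀ x ∈ Set.Icc a b, f x = f p

/-- If `l < m < r` with `f l = f r`, then `m` is irrelevant. -/
lemma irrelevant_of_between {K : Type*} [TopologicalSpace K] [LinearOrder K]
    (f : K → ℝ) (hmono : Monotone f) {l m r : K} (hlm : l < m) (hmr : m < r)
    (hf : f l = f r) : Irrelevant f m := by
  refine ⟨l, r, hlm.le, hmr.le, Or.inl hlm, Or.inl hmr, fun x hx => ?_⟩
  have h1 : f l ≤ f x := hmono hx.1
  have h2 : f x ≤ f r := hmono hx.2
  have h3 : f l ≤ f m := hmono hlm.le
  have h4 : f m ≤ f r := hmono hmr.le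
  rw [hf] at h1 h3
  linarith

/-- For a continuous increasing f on a compact linearly ordered space, the restriction of
f to ess(f) is at most two-to-one: each fiber meets ess(f) in at most two points. -/
theorem essential_restriction_two_to_one
    {K : Type*} [TopologicalSpace K] [LinearOrder K] [OrderTopology K] [CompactSpace K]
    (f : K → ℝ) (hcont : Continuous f) (hmono : Monotone f) :
    ∀ t : ℝ, ({p : K | ¬ Irrelevant f p ∧ f p = t}).encard ≤ 2 := by
  intro t
  set s := {p : K | ¬ Irrelevant f p ∧ f p = t} with hs
  -- key: no three distinct points in s
  have key : ∀ a ∈ s, ∀ b ∈ s, ∀ c ∈ s, a < b → b < c → False := by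
    intro a ha b hb c hc hab hbc
    exact hb.1 (irrelevant_of_between f hmono hab hbc (by rw [ha.2, hc.2]))
  by_contra hlt
  push_neg at hlt
  obtain ⟨a, b, ha, hb, hne⟩ := Set.one_lt_encard_iff.1 (lt_of_lt_of_le (by norm_num) hlt.le)
  have hsub : ¬ s ⊆ ({a, b} : Set K) := by
    intro hsub
    exact absurd (le_trans (Set.encard_le_encard hsub)
      (le_trans (Set.encard_insert_le _ _) (by rw [Set.encard_singleton]; rfl))) (not_le.2 hlt)
  obtain ⟨c, hc, hcab⟩ := Set.not_subset.1 hsub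
  simp only [Set.mem_insert_iff, Set.mem_singleton_iff, not_or] at hcab
  obtain ⟨hca, hcb⟩ := hcab
  -- three distinct points a, b, c; order them and apply key
  rcases lt_trichotomy a b with h1 | h1 | h1
  · rcases lt_trichotomy c a with h2 | h2 | h2
    · exact key c hc a ha b hb h2 h1
    · exact hca h2
    · rcases lt_trichotomy c b with h3 | h3 | h3
      · exact key a ha c hc b hb h2 h3
      · exact hcb h3
      · exact key a ha b hb c hc h1 h3
  · exact hne h1
  · rcases lt_trichotomy c b with h2 | h2 | h2
    · exact key c hc b hb a ha h2 h1
    · exact hcb h2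
    · rcases lt_trichotomy c a with h3 | h3 | h3
      · exact key b hb c hc a ha h2 h3
      · exact hca h3
      · exact key b hb a ha c hc h1 h3
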